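/- arXiv:2501.13058 — 2 statements merged into one kernel-verified Lean document; each statement's English description precedes it below -/
import Mathlib

section
/- Suppose P_0,P_1,P_2,P_3 are points of ℝ³ and ℓ_0,ℓ_1,ℓ_2,ℓ_3 are nonzero vectors of ℝ³ with ℓ_i · ℓ_3 ≠ 0 for each i, and suppose there exists an isometry T of ℝ³ such that for each i, T(P_i) ≠ 0 and T(P_i) lies on the line spanned by ℓ_i. Define, using cyclic indexing on {0,1,2}: a_i = ‖P_j − P_k‖², c_i = ‖P_i − P_3‖², b_i = (ℓ_i·ℓ_i)(ℓ_3·ℓ_3)/(ℓ_i·ℓ_3)², and d_i = (ℓ_j·ℓ_k)(ℓ_3·ℓ_3)/((ℓ_j·ℓ_3)(ℓ_k·ℓ_3)). Then there exist nonzero real numbers z_0,z_1,z_2,z_3 such that the six incidence equations a_i = b_j z_j² + b_k z_k² − 2 d_i z_j z_k and c_i = z_3² + b_i z_i² − 2 z_i z_3 hold for i = 0,1,2. -/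
open scoped RealInnerProductSpace

/-- Three-dimensional Euclidean space. -/
abbrev E3 := EuclideanSpace ℝ (Fin 3)

/-- The inclusion `{0,1,2} ↪ {0,1,2,3}`. -/
def idx (i : Fin 3) : Fin 4 := ⟨i.1, by omega⟩

/-!
Move the configuration by `T`, so that `T (P i) = tᵢ • ℓᵢ`, and take for `zᵢ` the signed length
of the projection of `T (P i)` onto the axis `ℓ₃`. For points on the lines `ℓᵢ` and `ℓⱼ`, the
product of these projections times `(ℓᵢ·ℓⱼ)(ℓ₃·ℓ₃)/((ℓᵢ·ℓ₃)(ℓⱼ·ℓ₃))` is their inner product, so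
`b` and `d` are exactly the coefficients turning the law of cosines
`‖p - q‖² = ⟪p, p⟫ - 2⟪p, q⟫ + ⟪q, q⟫` into the incidence equations; on the axis `ℓ₃` itself
the coefficient is `1`.
-/

section Projection

variable {V : Type*} [NormedAddCommGroup V] [InnerProductSpace ℝ V]

theorem inner_smul_right_self_eq_div_norm_mul_div_norm {w : V} (hw : w ≠ 0) (p : V) (t : ℝ) :
    ⟪p, t • w⟫ = ⟪p, w⟫ / ‖w‖ * (⟪t • w, w⟫ / ‖w‖) := by
  have hw' : ‖w‖ ≠ 0 := norm_ne_zero_iff.mpr hw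
  rw [real_inner_smul_left, real_inner_smul_right, real_inner_self_eq_norm_sq, real_inner_comm]
  field_simp

theorem inner_smul_smul_eq_mul_div_norm_mul_div_norm {u v w : V} (hu : ⟪u, w⟫ ≠ 0)
    (hv : ⟪v, w⟫ ≠ 0) (s t : ℝ) :
    ⟪s • u, t • v⟫ =
      ⟪u, v⟫ * ⟪w, w⟫ / (⟪u, w⟫ * ⟪v, w⟫) * (⟪s • u, w⟫ / ‖w‖) * (⟪t • v, w⟫ / ‖w‖) := by
  have hw : ‖w‖ ≠ 0 := norm_ne_zero_iff.mpr fun h => hu (by rw [h, inner_zero_right])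
  simp only [real_inner_smul_left, real_inner_smul_right, real_inner_self_eq_norm_sq]
  field_simp

end Projection

theorem statement2_general (P : Fin 4 → E3) (ℓ : Fin 4 → E3)
    (hdot : ∀ i, ⟪ℓ i, ℓ 3⟫ ≠ 0)
    (T : E3 ≃ᵢ E3)
    (hT : ∀ i, T (P i) ≠ 0 ∧ ∃ t : ℝ, T (P i) = t • ℓ i)
    (a c b d : Fin 3 → ℝ)
    (ha : ∀ i : Fin 3, a i = ‖P (idx (i + 1)) - P (idx (i + 2))‖ ^ 2)
    (hc : ∀ i : Fin 3, c i = ‖P (idx i) - P 3‖ ^ 2)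
    (hb : ∀ i : Fin 3,
      b i = (⟪ℓ (idx i), ℓ (idx i)⟫ * ⟪ℓ 3, ℓ 3⟫) / ⟪ℓ (idx i), ℓ 3⟫ ^ 2)
    (hd : ∀ i : Fin 3,
      d i = (⟪ℓ (idx (i + 1)), ℓ (idx (i + 2))⟫ * ⟪ℓ 3, ℓ 3⟫) /
        (⟪ℓ (idx (i + 1)), ℓ 3⟫ * ⟪ℓ (idx (i + 2)), ℓ 3⟫)) :
    ∃ z : Fin 4 → ℝ, (∀ i, z i ≠ 0) ∧ ∀ i : Fin 3,
      a i = b (i + 1) * z (idx (i + 1)) ^ 2 + b (i + 2) * z (idx (i + 2)) ^ 2 -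
          2 * d i * z (idx (i + 1)) * z (idx (i + 2)) ∧
      c i = z 3 ^ 2 + b i * z (idx i) ^ 2 - 2 * z (idx i) * z 3 := by
  choose hTne t hTt using hT
  have hℓ₃ : ℓ 3 ≠ 0 := fun h => hdot 3 (by rw [h, inner_zero_left])
  have hz : ∀ i, ⟪t i • ℓ i, ℓ 3⟫ / ‖ℓ 3‖ ≠ 0 := fun i => by
    have ht : t i ≠ 0 := fun h => hTne i (by rw [hTt i, h, zero_smul])
    rw [real_inner_smul_left]
    exact div_ne_zero (mul_ne_zero ht (hdot i)) (norm_ne_zero_iff.mpr hℓ₃)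
  have hcos : ∀ x y, ‖P x - P y‖ ^ 2 =
      ⟪t x • ℓ x, t x • ℓ x⟫ - 2 * ⟪t x • ℓ x, t y • ℓ y⟫ + ⟪t y • ℓ y, t y • ℓ y⟫ := by
    intro x y
    rw [← dist_eq_norm, ← T.dist_eq, dist_eq_norm, hTt, hTt, norm_sub_sq_real,
      real_inner_self_eq_norm_sq, real_inner_self_eq_norm_sq]
  have hproj := fun x y =>
    inner_smul_smul_eq_mul_div_norm_mul_div_norm (hdot x) (hdot y) (t x) (t y)
  have hproj₃ := fun x => inner_smul_right_self_eq_div_norm_mul_div_norm hℓ₃ (t x • ℓ x) (t 3)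
  refine ⟨fun i => ⟪t i • ℓ i, ℓ 3⟫ / ‖ℓ 3‖, hz, fun i => ⟨?_, ?_⟩⟩
  · rw [ha, hb, hb, hd, hcos]
    linear_combination hproj (idx (i + 1)) (idx (i + 1)) + hproj (idx (i + 2)) (idx (i + 2))
      - 2 * hproj (idx (i + 1)) (idx (i + 2))
  · rw [hc, hb, hcos]
    linear_combination hproj (idx i) (idx i) + hproj₃ 3 - 2 * hproj₃ (idx i)

theorem statement2 (P : Fin 4 → E3) (ℓ : Fin 4 → E3)
    (hne : ∀ i, ℓ i ≠ 0)
    (hdot : ∀ i, ⟪ℓ i, ℓ 3⟫ ≠ 0)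
    (T : E3 ≃ᵢ E3)
    (hT : ∀ i, T (P i) ≠ 0 ∧ ∃ t : ℝ, T (P i) = t • ℓ i)
    (a c b d : Fin 3 → ℝ)
    (ha : ∀ i : Fin 3, a i = ‖P (idx (i + 1)) - P (idx (i + 2))‖ ^ 2)
    (hc : ∀ i : Fin 3, c i = ‖P (idx i) - P 3‖ ^ 2)
    (hb : ∀ i : Fin 3,
      b i = (⟪ℓ (idx i), ℓ (idx i)⟫ * ⟪ℓ 3, ℓ 3⟫) / ⟪ℓ (idx i), ℓ 3⟫ ^ 2)
    (hd : ∀ i : Fin 3,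
      d i = (⟪ℓ (idx (i + 1)), ℓ (idx (i + 2))⟫ * ⟪ℓ 3, ℓ 3⟫) /
        (⟪ℓ (idx (i + 1)), ℓ 3⟫ * ⟪ℓ (idx (i + 2)), ℓ 3⟫)) :
    ∃ z : Fin 4 → ℝ, (∀ i, z i ≠ 0) ∧ ∀ i : Fin 3,
      a i = b (i + 1) * z (idx (i + 1)) ^ 2 + b (i + 2) * z (idx (i + 2)) ^ 2 -
          2 * d i * z (idx (i + 1)) * z (idx (i + 2)) ∧
      c i = z 3 ^ 2 + b i * z (idx i) ^ 2 - 2 * z (idx i) * z 3 :=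
  statement2_general P ℓ hdot T hT a c b d ha hc hb hd
end

section
/- Fix real numbers a_0,a_1,a_2,b_0,b_1,b_2,c_0,c_1,c_2,d_0,d_1,d_2. If (z_0,z_1,z_2,z_3) and (z'_0,z'_1,z'_2,z'_3) are two real quadruples both satisfying the six incidence equations for these fixed values, with z_i² = z'_i² for all i ∈ {0,1,2,3} and z_3 ≠ 0, then either z'_i = z_i for all i, or z'_i = −z_i for all i. -/
lemma mul_eq_mul_of_sq_eq_of_sq_eq {x x' t t' β : ℝ} (hx : x ^ 2 = x' ^ 2) (ht : t ^ 2 = t' ^ 2)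
    (h : t ^ 2 + β * x ^ 2 - 2 * x * t = t' ^ 2 + β * x' ^ 2 - 2 * x' * t') :
    x' * t' = x * t := by
  rw [hx, ht] at h
  linarith

lemma eq_or_eq_neg_of_mul_eq_mul {ι : Type*} {w w' : ι → ℝ} {t t' : ℝ} (ht0 : t ≠ 0)
    (ht : t ^ 2 = t' ^ 2) (hw : ∀ i, w' i * t' = w i * t) :
    (t' = t ∧ ∀ i, w' i = w i) ∨ (t' = -t ∧ ∀ i, w' i = -w i) := by
  rcases sq_eq_sq_iff_eq_or_eq_neg.mp ht.symm with rfl | rfl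
  · exact Or.inl ⟨rfl, fun i => mul_right_cancel₀ ht0 (hw i)⟩
  · refine Or.inr ⟨rfl, fun i => mul_right_cancel₀ ht0 ?_⟩
    linarith [hw i]

theorem statement8 (a b c d : Fin 3 → ℝ) (z z' : Fin 4 → ℝ)
    (hz : ∀ i : Fin 3,
      a i = b (i + 1) * z (idx (i + 1)) ^ 2 + b (i + 2) * z (idx (i + 2)) ^ 2 -
          2 * d i * z (idx (i + 1)) * z (idx (i + 2)) ∧
      c i = z 3 ^ 2 + b i * z (idx i) ^ 2 - 2 * z (idx i) * z 3)
    (hz' : ∀ i : Fin 3,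
      a i = b (i + 1) * z' (idx (i + 1)) ^ 2 + b (i + 2) * z' (idx (i + 2)) ^ 2 -
          2 * d i * z' (idx (i + 1)) * z' (idx (i + 2)) ∧
      c i = z' 3 ^ 2 + b i * z' (idx i) ^ 2 - 2 * z' (idx i) * z' 3)
    (hsq : ∀ i : Fin 4, z i ^ 2 = z' i ^ 2)
    (h3 : z 3 ≠ 0) :
    (∀ i, z' i = z i) ∨ (∀ i, z' i = -z i) := by
  have hcross : ∀ i : Fin 3, z' (idx i) * z' 3 = z (idx i) * z 3 := fun i =>
    mul_eq_mul_of_sq_eq_of_sq_eq (hsq (idx i)) (hsq 3) ((hz i).2.symm.trans (hz' i).2)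
  rcases eq_or_eq_neg_of_mul_eq_mul h3 (hsq 3) hcross with ⟨h3', hw⟩ | ⟨h3', hw⟩
  · exact Or.inl (Fin.lastCases h3' hw)
  · exact Or.inr (Fin.lastCases h3' hw)
end
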